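/- arXiv:2205.05417 — 2 statements merged into one kernel-verified Lean document; each statement's English description precedes it below -/
import Mathlib

section
/- For 0 < α ≤ 1 and λ > 0, the function s ↦ s^{α-1}/(λ + s^α) is completely monotone on (0,∞). -/
/-- A function is completely monotone on (0,∞) if it is infinitely differentiable
there and (-1)^n φ^(n)(x) ≥ 0 for all n ≥ 0 and x > 0. -/
def CompletelyMonotone (φ : ℝ → ℝ) : Prop :=
  (∀ x : ℝ, 0 < x → ContDiffAt ℝ (⊤ : ℕ∞) φ x) ∧
  ∀ (n : ℕ) (x : ℝ), 0 < x → 0 ≤ (-1 : ℝ) ^ n * iteratedDeriv n φ x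


open Topology Filter Set Finset

open Topology Filter Set Finset

lemma contDiffAt_top_deriv {f : ℝ → ℝ} {x : ℝ} (hf : ContDiffAt ℝ (⊤ : ℕ∞) f x) :
    ContDiffAt ℝ (⊤ : ℕ∞) (deriv f) x := by
  have h2 : ContDiffAt ℝ (⊤ : ℕ∞) (fderiv ℝ f) x := hf.fderiv_right (by simp)
  have h3 : ContDiffAt ℝ (⊤ : ℕ∞) (fun y => (ContinuousLinearMap.apply ℝ ℝ (1:ℝ)) (fderiv ℝ f y)) x :=
    h2.clm_apply contDiffAt_const
  have h4 : (fun y => (ContinuousLinearMap.apply ℝ ℝ (1:ℝ)) (fderiv ℝ f y)) = deriv f := by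
    funext y; exact fderiv_apply_one_eq_deriv
  rw [← h4]; exact h3

lemma contDiffAt_top_iteratedDeriv {f : ℝ → ℝ} {x : ℝ} (hf : ContDiffAt ℝ (⊤ : ℕ∞) f x) (n : ℕ) :
    ContDiffAt ℝ (⊤ : ℕ∞) (iteratedDeriv n f) x := by
  induction n with
  | zero => simpa using hf
  | succ n ih => rw [iteratedDeriv_succ]; exact contDiffAt_top_deriv ih

lemma hasDerivAt_iteratedDeriv {f : ℝ → ℝ} {x : ℝ} (hf : ContDiffAt ℝ (⊤ : ℕ∞) f x) (n : ℕ) :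
    HasDerivAt (iteratedDeriv n f) (iteratedDeriv (n+1) f x) x := by
  have := ((contDiffAt_top_iteratedDeriv hf n).differentiableAt (by simp)).hasDerivAt
  rwa [← iteratedDeriv_succ] at this

/-- Leibniz formula for iterated derivatives at a point of smoothness. -/
lemma iteratedDeriv_mul_apply {f g : ℝ → ℝ} (n : ℕ) :
    ∀ x : ℝ, 0 < x → (∀ y : ℝ, 0 < y → ContDiffAt ℝ (⊤ : ℕ∞) f y) →
      (∀ y : ℝ, 0 < y → ContDiffAt ℝ (⊤ : ℕ∞) g y) →
    iteratedDeriv n (fun y => f y * g y) x =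
      ∑ k ∈ Finset.range (n+1),
        (n.choose k : ℝ) * (iteratedDeriv k f x * iteratedDeriv (n-k) g x) := by
  induction n with
  | zero => intro x _ _ _; simp
  | succ n ih =>
    intro x hx hf hg
    rw [iteratedDeriv_succ]
    have hev : iteratedDeriv n (fun y => f y * g y) =ᶠ[𝓝 x]
        fun y => ∑ k ∈ Finset.range (n+1),
          (n.choose k : ℝ) * (iteratedDeriv k f y * iteratedDeriv (n-k) g y) := by
      filter_upwards [Ioi_mem_nhds hx] with y hy
      exact ih y hy hf hg
    rw [hev.deriv_eq]
    have hd : HasDerivAt (fun y => ∑ k ∈ Finset.range (n+1),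
          (n.choose k : ℝ) * (iteratedDeriv k f y * iteratedDeriv (n-k) g y))
        (∑ k ∈ Finset.range (n+1), (n.choose k : ℝ) *
          (iteratedDeriv (k+1) f x * iteratedDeriv (n-k) g x +
           iteratedDeriv k f x * iteratedDeriv (n-k+1) g x)) x := by
      apply HasDerivAt.fun_sum
      intro k _
      exact (((hasDerivAt_iteratedDeriv (hf x hx) k).mul (hasDerivAt_iteratedDeriv (hg x hx) (n-k)))).const_mul _
    rw [hd.deriv]
    -- combinatorial rearrangement
    set A : ℕ → ℕ → ℝ := fun i j => iteratedDeriv i f x * iteratedDeriv j g x with hA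
    have lhs_eq : ∑ k ∈ Finset.range (n+1), (n.choose k : ℝ) *
          (iteratedDeriv (k+1) f x * iteratedDeriv (n-k) g x +
           iteratedDeriv k f x * iteratedDeriv (n-k+1) g x)
        = (∑ k ∈ Finset.range (n+1), (n.choose k : ℝ) * A (k+1) (n-k))
          + ∑ k ∈ Finset.range (n+1), (n.choose k : ℝ) * A k (n+1-k) := by
      rw [← Finset.sum_add_distrib]
      apply Finset.sum_congr rfl
      intro k hk
      have hk' : k ≤ n := Nat.lt_succ_iff.mp (Finset.mem_range.mp hk)
      have h2 : n - k + 1 = n + 1 - k := by omega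
      simp only [hA]
      rw [h2]
      ring
    rw [lhs_eq]
    have rhs_eq : ∑ k ∈ Finset.range (n+1+1), ((n+1).choose k : ℝ) *
          (iteratedDeriv k f x * iteratedDeriv (n+1-k) g x)
        = (∑ k ∈ Finset.range (n+1), ((n+1).choose (k+1) : ℝ) * A (k+1) (n-k)) + A 0 (n+1) := by
      rw [Finset.sum_range_succ']
      congr 1
      · apply Finset.sum_congr rfl
        intro k _
        have : n + 1 - (k+1) = n - k := by omega
        rw [this]
      · simp [hA]
    rw [rhs_eq]
    have second_eq : ∑ k ∈ Finset.range (n+1), (n.choose k : ℝ) * A k (n+1-k)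
        = (∑ k ∈ Finset.range (n+1), (n.choose (k+1) : ℝ) * A (k+1) (n-k)) + A 0 (n+1) := by
      rw [Finset.sum_range_succ']
      congr 1
      · rw [Finset.sum_range_succ]
        simp only [Nat.choose_succ_self, Nat.cast_zero, zero_mul, add_zero]
        apply Finset.sum_congr rfl
        intro k _
        have : n + 1 - (k+1) = n - k := by omega
        rw [this]
      · simp
    rw [second_eq, ← add_assoc, ← Finset.sum_add_distrib]
    congr 1
    apply Finset.sum_congr rfl
    intro k _
    rw [Nat.choose_succ_succ n k]
    push_cast
    ring


lemma iteratedDeriv_const_mul_rpow (C c : ℝ) (n : ℕ) :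
    ∀ x : ℝ, 0 < x → iteratedDeriv n (fun s : ℝ => C * s ^ c) x
      = C * (∏ i ∈ Finset.range n, (c - i)) * x ^ (c - n) := by
  induction n with
  | zero => intro x _; simp
  | succ n ih =>
    intro x hx
    rw [iteratedDeriv_succ]
    have hev : iteratedDeriv n (fun s : ℝ => C * s ^ c) =ᶠ[𝓝 x]
        fun y => C * (∏ i ∈ Finset.range n, (c - i)) * y ^ (c - n) := by
      filter_upwards [Ioi_mem_nhds hx] with y hy using ih y hy
    rw [hev.deriv_eq]
    have hd : HasDerivAt (fun y : ℝ => C * (∏ i ∈ Finset.range n, (c - i)) * y ^ (c - n))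
        (C * (∏ i ∈ Finset.range n, (c - i)) * ((c - n) * x ^ (c - n - 1))) x :=
      (Real.hasDerivAt_rpow_const (Or.inl hx.ne')).const_mul _
    rw [hd.deriv, Finset.prod_range_succ]
    have he : c - (n + 1 : ℕ) = c - n - 1 := by push_cast; ring
    rw [he]
    ring

lemma sign_prod_range (c : ℝ) (hc : c ≤ 0) (n : ℕ) :
    0 ≤ (-1 : ℝ) ^ n * ∏ i ∈ Finset.range n, (c - i) := by
  induction n with
  | zero => simp
  | succ n ih =>
    rw [Finset.prod_range_succ, pow_succ]
    have h1 : 0 ≤ -(c - n) := by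
      have : (0:ℝ) ≤ n := Nat.cast_nonneg n
      linarith
    calc (0:ℝ) ≤ ((-1:ℝ)^n * ∏ i ∈ Finset.range n, (c - i)) * -(c - n) :=
          mul_nonneg ih h1
      _ = (-1:ℝ)^n * -1 * ((∏ i ∈ Finset.range n, (c - i)) * (c - n)) := by ring

lemma cm_const_mul_rpow (C c : ℝ) (hC : 0 ≤ C) (hc : c ≤ 0) :
    CompletelyMonotone (fun s : ℝ => C * s ^ c) := by
  constructor
  · intro x hx
    exact (contDiffAt_const (c := C)).mul (Real.contDiffAt_rpow_const_of_ne hx.ne')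
  · intro n x hx
    rw [iteratedDeriv_const_mul_rpow C c n x hx]
    have := sign_prod_range c hc n
    have hxp : (0:ℝ) ≤ x ^ (c - n) := (Real.rpow_pos_of_pos hx _).le
    calc (0:ℝ) ≤ (C * ((-1:ℝ)^n * ∏ i ∈ Finset.range n, (c - i))) * x ^ (c - n) :=
          mul_nonneg (mul_nonneg hC this) hxp
      _ = (-1:ℝ)^n * (C * (∏ i ∈ Finset.range n, (c - i)) * x ^ (c - n)) := by ring

lemma cm_congr {f g : ℝ → ℝ} (h : ∀ x : ℝ, 0 < x → f x = g x)
    (hg : CompletelyMonotone g) : CompletelyMonotone f := by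
  constructor
  · intro x hx
    exact (hg.1 x hx).congr_of_eventuallyEq
      (by filter_upwards [Ioi_mem_nhds hx] with y hy using h y hy)
  · intro n x hx
    have hev : f =ᶠ[𝓝 x] g := by filter_upwards [Ioi_mem_nhds hx] with y hy using h y hy
    rw [hev.iteratedDeriv_eq]
    exact hg.2 n x hx

lemma cm_mul {f g : ℝ → ℝ} (hf : CompletelyMonotone f) (hg : CompletelyMonotone g) :
    CompletelyMonotone (fun x => f x * g x) := by
  constructor
  · intro x hx; exact (hf.1 x hx).mul (hg.1 x hx)
  · intro n x hx
    rw [iteratedDeriv_mul_apply n x hx hf.1 hg.1, Finset.mul_sum]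
    apply Finset.sum_nonneg
    intro k hk
    have hkn : k + (n - k) = n := Nat.add_sub_cancel' (Nat.lt_succ_iff.mp (Finset.mem_range.mp hk))
    have hpow : (-1:ℝ)^n = (-1:ℝ)^k * (-1:ℝ)^(n-k) := by rw [← pow_add, hkn]
    have h1 : 0 ≤ (-1:ℝ)^k * iteratedDeriv k f x := hf.2 k x hx
    have h2 : 0 ≤ (-1:ℝ)^(n-k) * iteratedDeriv (n-k) g x := hg.2 (n-k) x hx
    calc (0:ℝ) ≤ (n.choose k : ℝ) * (((-1:ℝ)^k * iteratedDeriv k f x) *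
          ((-1:ℝ)^(n-k) * iteratedDeriv (n-k) g x)) :=
        mul_nonneg (Nat.cast_nonneg _) (mul_nonneg h1 h2)
      _ = (-1:ℝ)^n * ((n.choose k : ℝ) * (iteratedDeriv k f x * iteratedDeriv (n-k) g x)) := by
        rw [hpow]; ring

lemma cm_neg_deriv {f : ℝ → ℝ} (hf : CompletelyMonotone f) :
    CompletelyMonotone (fun y => -(deriv f y)) := by
  constructor
  · intro x hx; exact (contDiffAt_top_deriv (hf.1 x hx)).neg
  · intro n x hx
    rw [iteratedDeriv_fun_neg]
    have h := hf.2 (n+1) x hx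
    rw [iteratedDeriv_succ'] at h
    calc (0:ℝ) ≤ (-1:ℝ)^(n+1) * iteratedDeriv n (deriv f) x := h
      _ = (-1:ℝ)^n * -iteratedDeriv n (deriv f) x := by ring

lemma cm_comp {f g : ℝ → ℝ} (hf : CompletelyMonotone f)
    (hgs : ∀ x : ℝ, 0 < x → ContDiffAt ℝ (⊤ : ℕ∞) g x)
    (hgpos : ∀ x : ℝ, 0 < x → 0 < g x)
    (hg' : ∀ (n : ℕ) (x : ℝ), 0 < x → 0 ≤ (-1:ℝ)^n * iteratedDeriv (n+1) g x) :
    CompletelyMonotone (fun x => f (g x)) := by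
  have smooth : ∀ (f : ℝ → ℝ), CompletelyMonotone f → ∀ x : ℝ, 0 < x →
      ContDiffAt ℝ (⊤ : ℕ∞) (fun y => f (g y)) x := by
    intro f hf x hx
    exact ((hf.1 (g x) (hgpos x hx)).comp x (hgs x hx) : ContDiffAt ℝ (⊤ : ℕ∞) (f ∘ g) x)
  have key : ∀ n : ℕ, ∀ F : ℝ → ℝ, CompletelyMonotone F →
      ∀ x : ℝ, 0 < x → 0 ≤ (-1:ℝ)^n * iteratedDeriv n (fun y => F (g y)) x := by
    intro n
    induction n using Nat.strong_induction_on with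
    | _ n IH =>
      match n with
      | 0 =>
        intro F hF x hx
        simpa using hF.2 0 (g x) (hgpos x hx)
      | (n+1) =>
        intro F hF x hx
        rw [iteratedDeriv_succ']
        -- deriv (F ∘ g) agrees with the product on a neighborhood
        have hder : ∀ y : ℝ, 0 < y →
            deriv (fun z => F (g z)) y = deriv F (g y) * deriv g y := by
          intro y hy
          have h1 : HasDerivAt g (deriv g y) y :=
            ((hgs y hy).differentiableAt (by simp)).hasDerivAt
          have h2 : HasDerivAt F (deriv F (g y)) (g y) :=
            ((hF.1 (g y) (hgpos y hy)).differentiableAt (by simp)).hasDerivAt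
          exact (h2.comp y h1).deriv
        have hev : deriv (fun z => F (g z)) =ᶠ[𝓝 x]
            fun y => deriv F (g y) * deriv g y := by
          filter_upwards [Ioi_mem_nhds hx] with y hy using hder y hy
        rw [hev.iteratedDeriv_eq]
        set Fn : ℝ → ℝ := fun z => -(deriv F z) with hFn
        have hFncm : CompletelyMonotone Fn := cm_neg_deriv hF
        have hc1 : ∀ y : ℝ, 0 < y → ContDiffAt ℝ (⊤ : ℕ∞) (fun z => deriv F (g z)) y := by
          intro y hy
          exact ((contDiffAt_top_deriv (hF.1 (g y) (hgpos y hy))).comp y (hgs y hy) :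
            ContDiffAt ℝ (⊤ : ℕ∞) (deriv F ∘ g) y)
        have hc2 : ∀ y : ℝ, 0 < y → ContDiffAt ℝ (⊤ : ℕ∞) (deriv g) y := fun y hy =>
          contDiffAt_top_deriv (hgs y hy)
        rw [iteratedDeriv_mul_apply n x hx hc1 hc2, Finset.mul_sum]
        apply Finset.sum_nonneg
        intro k hk
        have hkle : k ≤ n := Nat.lt_succ_iff.mp (Finset.mem_range.mp hk)
        have hneg : iteratedDeriv k (fun z => deriv F (g z)) x
            = -iteratedDeriv k (fun z => Fn (g z)) x := by
          have : (fun z => Fn (g z)) = fun z => -(deriv F (g z)) := by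
            funext z; rw [hFn]
          rw [this, iteratedDeriv_fun_neg, neg_neg]
        have h1 : 0 ≤ (-1:ℝ)^k * iteratedDeriv k (fun z => Fn (g z)) x :=
          IH k (Nat.lt_succ_of_le hkle) Fn hFncm x hx
        have h2 : 0 ≤ (-1:ℝ)^(n-k) * iteratedDeriv (n-k) (deriv g) x := by
          have := hg' (n-k) x hx
          rwa [iteratedDeriv_succ'] at this
        have hpow : (-1:ℝ)^(n+1) = -((-1:ℝ)^k * (-1:ℝ)^(n-k)) := by
          rw [← pow_add, Nat.add_sub_cancel' hkle, pow_succ]; ring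
        calc (0:ℝ) ≤ (n.choose k : ℝ) * (((-1:ℝ)^k * iteratedDeriv k (fun z => Fn (g z)) x) *
              ((-1:ℝ)^(n-k) * iteratedDeriv (n-k) (deriv g) x)) :=
            mul_nonneg (Nat.cast_nonneg _) (mul_nonneg h1 h2)
          _ = (-1:ℝ)^(n+1) * ((n.choose k : ℝ) *
              (iteratedDeriv k (fun z => deriv F (g z)) x * iteratedDeriv (n-k) (deriv g) x)) := by
            rw [hneg, hpow]; ring
  exact ⟨smooth f hf, fun n x hx => key n f hf x hx⟩

/-- For 0 < α ≤ 1 and λ > 0, the function s ↦ s^{α-1}/(λ + s^α) is completely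
monotone on (0,∞). -/
theorem completelyMonotone_laplace_ML (α lam : ℝ) (hα : 0 < α) (hα1 : α ≤ 1)
    (hlam : 0 < lam) :
    CompletelyMonotone (fun s => s ^ (α - 1) / (lam + s ^ α)) := by
  set G : ℝ → ℝ := fun s => lam + s ^ α with hG
  have hgs : ∀ x : ℝ, 0 < x → ContDiffAt ℝ (⊤ : ℕ∞) G x := by
    intro x hx
    exact (contDiffAt_const (c := lam)).add (Real.contDiffAt_rpow_const_of_ne hx.ne')
  have hgpos : ∀ x : ℝ, 0 < x → 0 < G x := fun x hx =>
    add_pos hlam (Real.rpow_pos_of_pos hx α)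
  have hg' : ∀ (n : ℕ) (x : ℝ), 0 < x → 0 ≤ (-1:ℝ)^n * iteratedDeriv (n+1) G x := by
    intro n x hx
    rw [iteratedDeriv_succ']
    have hder : ∀ y : ℝ, 0 < y → deriv G y = α * y ^ (α - 1) := by
      intro y hy
      exact ((Real.hasDerivAt_rpow_const (p := α) (Or.inl hy.ne')).const_add lam).deriv
    have hev : deriv G =ᶠ[𝓝 x] fun y => α * y ^ (α - 1) := by
      filter_upwards [Ioi_mem_nhds hx] with y hy using hder y hy
    rw [hev.iteratedDeriv_eq]
    exact (cm_const_mul_rpow α (α - 1) hα.le (by linarith)).2 n x hx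
  have hcomp : CompletelyMonotone (fun x : ℝ => (1:ℝ) * (G x) ^ (-1:ℝ)) :=
    cm_comp (f := fun u : ℝ => (1:ℝ) * u ^ (-1:ℝ)) (g := G)
      (cm_const_mul_rpow 1 (-1) one_pos.le (by norm_num)) hgs hgpos hg'
  have hcm : CompletelyMonotone
      (fun x : ℝ => ((1:ℝ) * x ^ (α - 1)) * ((1:ℝ) * (G x) ^ (-1:ℝ))) :=
    cm_mul (cm_const_mul_rpow 1 (α - 1) one_pos.le (by linarith)) hcomp
  apply cm_congr _ hcm
  intro x hx
  have hGx : (0:ℝ) < G x := hgpos x hx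
  simp only [one_mul]
  rw [Real.rpow_neg_one, div_eq_mul_inv]
end

section
/- For 0 < α < 1, λ > 0, suppose f_α(·|t) is a family of probability densities on (0,∞) with ∫_0^∞ e^{-sx} f_α(x|t) dx = e^{-t s^α} for all s,t > 0, and f_α(x|t) = f_α(x t^{-1/α}) t^{-1/α} (scaling property). Then for s > 0: ∫_0^∞ e^{-sx} [x ∫_0^∞ f_α(x|t) t^{-1} e^{-λt} dt] dx = α s^{α-1}/(λ + s^α). -/
open MeasureTheory Set

/-- If the Laplace transform value is nonzero, the integrand is integrable. -/
private lemma lap_integrable {g : ℝ → ℝ} {c : ℝ} (hc : c ≠ 0)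
    (h : (∫ x in Set.Ioi (0 : ℝ), g x) = c) :
    IntegrableOn g (Set.Ioi (0 : ℝ)) := by
  by_contra h'
  rw [MeasureTheory.integral_undef h'] at h
  exact hc h.symm

/-- Elementary bound `x * exp (-r*x) ≤ (2/r) * exp (-(r/2)*x)`. -/
private lemma moment_bound {r x : ℝ} (hr : 0 < r) (hx : 0 ≤ x) :
    x * Real.exp (-r * x) ≤ (2 / r) * Real.exp (-(r / 2) * x) := by
  have hkey : x * Real.exp (-(r / 2) * x) ≤ 2 / r := by
    have h1 : (r / 2) * x ≤ Real.exp ((r / 2) * x) :=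
      le_trans (le_add_of_nonneg_left zero_le_one)
        (by simpa [add_comm] using Real.add_one_le_exp ((r / 2) * x))
    have h2 : x ≤ (2 / r) * Real.exp ((r / 2) * x) := by
      have := mul_le_mul_of_nonneg_left h1 (le_of_lt (by positivity : (0:ℝ) < 2 / r))
      calc x = (2 / r) * ((r / 2) * x) := by field_simp
        _ ≤ (2 / r) * Real.exp ((r / 2) * x) := this
    calc x * Real.exp (-(r / 2) * x)
        ≤ ((2 / r) * Real.exp ((r / 2) * x)) * Real.exp (-(r / 2) * x) :=
          mul_le_mul_of_nonneg_right h2 (Real.exp_pos _).le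
      _ = 2 / r := by
          rw [mul_assoc, ← Real.exp_add]
          ring_nf
          simp
  have hsplit : x * Real.exp (-r * x) =
      (x * Real.exp (-(r / 2) * x)) * Real.exp (-(r / 2) * x) := by
    rw [mul_assoc, ← Real.exp_add]
    ring_nf
  rw [hsplit]
  exact mul_le_mul_of_nonneg_right hkey (Real.exp_pos _).le

section Main

variable {α lam : ℝ} {f : ℝ → ℝ → ℝ}

/-- Integrability of the first-moment integrand. -/
private lemma moment_integrable (hf_meas : Measurable (Function.uncurry f))
    (hf_nonneg : ∀ x t : ℝ, 0 < x → 0 < t → 0 ≤ f x t)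
    (hInt : ∀ s t : ℝ, 0 < s → 0 < t →
      IntegrableOn (fun x => Real.exp (-s * x) * f x t) (Set.Ioi (0 : ℝ)))
    {r t : ℝ} (hr : 0 < r) (ht : 0 < t) :
    IntegrableOn (fun x => x * Real.exp (-r * x) * f x t) (Set.Ioi (0 : ℝ)) := by
  have hmeas : Measurable (fun x => x * Real.exp (-r * x) * f x t) := by
    have : Measurable (fun x : ℝ => f x t) :=
      hf_meas.comp (measurable_id.prodMk measurable_const)
    fun_prop
  refine Integrable.mono' (((hInt (r/2) t (by positivity) ht).const_mul (2/r)))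
    hmeas.aestronglyMeasurable ?_
  filter_upwards [ae_restrict_mem measurableSet_Ioi] with x hx
  have hx0 : (0:ℝ) < x := hx
  have hfnn := hf_nonneg x t hx0 ht
  rw [Real.norm_eq_abs, abs_of_nonneg (by positivity)]
  calc x * Real.exp (-r * x) * f x t
      ≤ ((2 / r) * Real.exp (-(r / 2) * x)) * f x t :=
        mul_le_mul_of_nonneg_right (moment_bound hr hx0.le) hfnn
    _ = 2 / r * (Real.exp (-(r / 2) * x) * f x t) := by ring

/-- The first moment of the stable density with `t = 1`. -/
private lemma moment_one (hα : 0 < α)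
    (hf_meas : Measurable (Function.uncurry f))
    (hf_nonneg : ∀ x t : ℝ, 0 < x → 0 < t → 0 ≤ f x t)
    (hf_laplace : ∀ s t : ℝ, 0 < s → 0 < t →
      (∫ x in Set.Ioi (0 : ℝ), Real.exp (-s * x) * f x t) = Real.exp (-t * s ^ α))
    {r : ℝ} (hr : 0 < r) :
    (∫ x in Set.Ioi (0 : ℝ), x * Real.exp (-r * x) * f x 1) =
      α * r ^ (α - 1) * Real.exp (-(r ^ α)) := by
  have hInt : ∀ s t : ℝ, 0 < s → 0 < t →
      IntegrableOn (fun x => Real.exp (-s * x) * f x t) (Set.Ioi (0 : ℝ)) :=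
    fun s t hs ht => lap_integrable (Real.exp_pos _).ne' (hf_laplace s t hs ht)
  set μ := volume.restrict (Set.Ioi (0 : ℝ)) with hμ
  set F : ℝ → ℝ → ℝ := fun r x => Real.exp (-r * x) * f x 1 with hF
  set F' : ℝ → ℝ → ℝ := fun r x => (-x) * (Real.exp (-r * x) * f x 1) with hF'
  have hmeasf1 : Measurable (fun x : ℝ => f x 1) :=
    hf_meas.comp (measurable_id.prodMk measurable_const)
  have hεpos : (0:ℝ) < r / 2 := by positivity
  have key := hasDerivAt_integral_of_dominated_loc_of_deriv_le (μ := μ)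
      (F := F) (F' := F') (x₀ := r)
      (bound := fun x => x * Real.exp (-(r/2) * x) * f x 1) (Metric.ball_mem_nhds r hεpos)
      (Filter.Eventually.of_forall fun r' => by
        apply Measurable.aestronglyMeasurable; fun_prop)
      ((hInt r 1 hr one_pos))
      (by apply Measurable.aestronglyMeasurable; fun_prop)
      ?_ ?_ ?_
  · obtain ⟨-, hder⟩ := key
    have heq : (fun r' => ∫ a, F r' a ∂μ) =ᶠ[nhds r]
        (fun r' => Real.exp (-(r' ^ α))) := by
      filter_upwards [Ioi_mem_nhds hr] with r' hr'
      have := hf_laplace r' 1 hr' one_pos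
      rw [show Real.exp (-1 * r' ^ α) = Real.exp (-(r' ^ α)) by norm_num] at this
      exact this
    have hder2 : HasDerivAt (fun r' => Real.exp (-(r' ^ α)))
        (∫ a, F' r a ∂μ) r := hder.congr_of_eventuallyEq heq.symm
    have h1 : HasDerivAt (fun y : ℝ => y ^ α) (α * r ^ (α - 1)) r :=
      Real.hasDerivAt_rpow_const (Or.inl hr.ne')
    have h2 : HasDerivAt (fun y : ℝ => Real.exp (-(y ^ α)))
        (Real.exp (-(r ^ α)) * -(α * r ^ (α - 1))) r := h1.neg.exp
    have huniq := hder2.unique h2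
    have hneg : (∫ a, F' r a ∂μ) =
        -∫ x in Set.Ioi (0:ℝ), x * Real.exp (-r * x) * f x 1 := by
      rw [← MeasureTheory.integral_neg]
      exact integral_congr_ae (Filter.Eventually.of_forall fun a => by
        simp only [hF']; ring)
    rw [hneg] at huniq
    have : (∫ x in Set.Ioi (0:ℝ), x * Real.exp (-r * x) * f x 1) =
        Real.exp (-(r ^ α)) * (α * r ^ (α - 1)) := by linarith
    rw [this]; ring
  · -- bound
    filter_upwards [ae_restrict_mem measurableSet_Ioi] with a ha
    intro x hx
    have ha0 : (0:ℝ) < a := ha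
    have hx2 : r / 2 ≤ x := by
      have := abs_lt.mp (by simpa [Metric.mem_ball, Real.dist_eq] using hx)
      linarith [this.1]
    have hfnn := hf_nonneg a 1 ha0 one_pos
    rw [Real.norm_eq_abs, hF']
    rw [abs_mul, abs_neg, abs_of_nonneg ha0.le,
      abs_of_nonneg (by positivity : (0:ℝ) ≤ Real.exp (-x * a) * f a 1)]
    calc a * (Real.exp (-x * a) * f a 1) = a * Real.exp (-x * a) * f a 1 := by ring
      _ ≤ a * Real.exp (-(r/2) * a) * f a 1 := by
          have hexp : Real.exp (-x * a) ≤ Real.exp (-(r/2) * a) :=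
            Real.exp_le_exp.mpr (by nlinarith)
          gcongr
  · exact moment_integrable hf_meas hf_nonneg hInt hεpos one_pos
  · -- differentiability
    filter_upwards with a
    intro x hx
    have h := (((hasDerivAt_id x).neg.mul_const a).exp.mul_const (f a 1))
    have he : F' x a = Real.exp (-x * a) * (-1 * a) * f a 1 := by
      simp only [hF']; ring
    rw [he]
    exact h

/-- The first moment of the stable density for general `t`. -/
private lemma moment_general (hα : 0 < α)
    (hf_meas : Measurable (Function.uncurry f))
    (hf_nonneg : ∀ x t : ℝ, 0 < x → 0 < t → 0 ≤ f x t)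
    (hf_laplace : ∀ s t : ℝ, 0 < s → 0 < t →
      (∫ x in Set.Ioi (0 : ℝ), Real.exp (-s * x) * f x t) = Real.exp (-t * s ^ α))
    (hf_scaling : ∀ x t : ℝ, 0 < x → 0 < t →
      f x t = f (x * t ^ (-(1 / α))) 1 * t ^ (-(1 / α)))
    {s t : ℝ} (hs : 0 < s) (ht : 0 < t) :
    (∫ x in Set.Ioi (0 : ℝ), x * Real.exp (-s * x) * f x t) =
      α * t * s ^ (α - 1) * Real.exp (-t * s ^ α) := by
  set c := t ^ (1/α) with hc
  have hc0 : 0 < c := Real.rpow_pos_of_pos ht _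
  have hcinv : t ^ (-(1/α)) = c⁻¹ := by rw [Real.rpow_neg ht.le]
  have hcα : c ^ α = t := by
    rw [hc, ← Real.rpow_mul ht.le, one_div_mul_cancel hα.ne', Real.rpow_one]
  set g : ℝ → ℝ := fun y => y * Real.exp (-s * y) * (f (y * c⁻¹) 1 * c⁻¹) with hg
  have h1 : (∫ x in Set.Ioi (0:ℝ), x * Real.exp (-s * x) * f x t)
      = ∫ x in Set.Ioi (0:ℝ), g x := by
    refine setIntegral_congr_fun measurableSet_Ioi fun x hx => ?_
    simp only [hg]
    rw [hf_scaling x t hx ht, hcinv]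
  have h2 := MeasureTheory.integral_comp_mul_right_Ioi g 0 hc0
  rw [zero_mul] at h2
  have h3 : (∫ u in Set.Ioi (0:ℝ), g (u * c))
      = ∫ u in Set.Ioi (0:ℝ), u * Real.exp (-(s*c) * u) * f u 1 := by
    refine integral_congr_ae (Filter.Eventually.of_forall fun u => ?_)
    simp only [hg]
    rw [mul_assoc u c c⁻¹, mul_inv_cancel₀ hc0.ne', mul_one]
    rw [show -s * (u * c) = -(s*c) * u from by ring]
    field_simp
  have h4 := moment_one (f := f) hα hf_meas hf_nonneg hf_laplace
    (mul_pos hs hc0)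
  have h5 : (∫ x in Set.Ioi (0:ℝ), g x)
      = c * (α * (s*c) ^ (α-1) * Real.exp (-((s*c) ^ α))) := by
    rw [show (∫ x in Set.Ioi (0:ℝ), g x) = c • ∫ u in Set.Ioi (0:ℝ), g (u * c) from by
      rw [h2, smul_smul, mul_inv_cancel₀ hc0.ne', one_smul]]
    rw [h3, h4, smul_eq_mul]
  rw [h1, h5]
  have hsc : (s*c) ^ α = s ^ α * t := by
    rw [Real.mul_rpow hs.le hc0.le, hcα]
  have hsc1 : c * (s*c) ^ (α-1) = s ^ (α-1) * t := by
    rw [Real.mul_rpow hs.le hc0.le]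
    have : c * c ^ (α-1) = t := by
      calc c * c ^ (α-1) = c ^ (1:ℝ) * c ^ (α-1) := by rw [Real.rpow_one]
        _ = c ^ (1 + (α-1)) := (Real.rpow_add hc0 _ _).symm
        _ = c ^ α := by norm_num
        _ = t := hcα
    calc c * (s ^ (α-1) * c ^ (α-1)) = s ^ (α-1) * (c * c ^ (α-1)) := by ring
      _ = s ^ (α-1) * t := by rw [this]
  calc c * (α * (s*c) ^ (α-1) * Real.exp (-((s*c) ^ α)))
      = α * (c * (s*c) ^ (α-1)) * Real.exp (-((s*c) ^ α)) := by ring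
    _ = α * (s ^ (α-1) * t) * Real.exp (-(s ^ α * t)) := by rw [hsc1, hsc]
    _ = α * t * s ^ (α - 1) * Real.exp (-t * s ^ α) := by ring_nf

end Main

/-- The Laplace transform of x ∫_0^∞ f_α(x|t) t^{-1} e^{-λt} dt equals
α s^{α-1}/(λ + s^α), where f_α(·|t) is the stable density of index α with scale t
(Laplace transform e^{-t s^α}) satisfying the scaling property. -/
theorem ML_integral_representation_laplace (α lam : ℝ) (hα : 0 < α) (hα1 : α < 1)
    (hlam : 0 < lam) (f : ℝ → ℝ → ℝ)
    (hf_meas : Measurable (Function.uncurry f))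
    (hf_nonneg : ∀ x t : ℝ, 0 < x → 0 < t → 0 ≤ f x t)
    (hf_laplace : ∀ s t : ℝ, 0 < s → 0 < t →
      (∫ x in Set.Ioi (0 : ℝ), Real.exp (-s * x) * f x t) = Real.exp (-t * s ^ α))
    (hf_scaling : ∀ x t : ℝ, 0 < x → 0 < t →
      f x t = f (x * t ^ (-(1 / α))) 1 * t ^ (-(1 / α))) :
    ∀ s : ℝ, 0 < s →
      (∫ x in Set.Ioi (0 : ℝ), Real.exp (-s * x) *
          (x * ∫ t in Set.Ioi (0 : ℝ), f x t * t⁻¹ * Real.exp (-lam * t))) =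
        α * s ^ (α - 1) / (lam + s ^ α) := by
  intro s hs
  have hInt : ∀ s t : ℝ, 0 < s → 0 < t →
      IntegrableOn (fun x => Real.exp (-s * x) * f x t) (Set.Ioi (0 : ℝ)) :=
    fun s t hs ht => lap_integrable (Real.exp_pos _).ne' (hf_laplace s t hs ht)
  set μ := volume.restrict (Set.Ioi (0 : ℝ)) with hμ
  set H : ℝ → ℝ → ℝ :=
    fun x t => Real.exp (-s * x) * x * (f x t * t⁻¹ * Real.exp (-lam * t)) with hH
  have hb0 : (0:ℝ) < lam + s ^ α := by
    have := Real.rpow_pos_of_pos hs α; linarith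
  -- inner integral in x for fixed t > 0
  have hinner : ∀ t : ℝ, 0 < t → (∫ x, H x t ∂μ) =
      (α * s ^ (α - 1)) * Real.exp (-(lam + s ^ α) * t) := by
    intro t ht
    have hcongr : (∫ x, H x t ∂μ) =
        ∫ x, (t⁻¹ * Real.exp (-lam * t)) * (x * Real.exp (-s * x) * f x t) ∂μ :=
      integral_congr_ae (Filter.Eventually.of_forall fun x => by simp only [hH]; ring)
    rw [hcongr, MeasureTheory.integral_const_mul]
    rw [hμ, moment_general hα hf_meas hf_nonneg hf_laplace hf_scaling hs ht]
    rw [show t⁻¹ * Real.exp (-lam * t) * (α * t * s ^ (α-1) * Real.exp (-t * s ^ α))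
        = (t⁻¹ * t) * ((α * s ^ (α-1)) * (Real.exp (-lam * t) * Real.exp (-t * s ^ α)))
        from by ring, inv_mul_cancel₀ ht.ne', one_mul, ← Real.exp_add]
    congr 2
    ring
  have hnn : ∀ t : ℝ, 0 < t → ∀ x : ℝ, x ∈ Set.Ioi (0:ℝ) → 0 ≤ H x t := by
    intro t ht x hx
    have h1 := hf_nonneg x t hx ht
    have hx' : (0:ℝ) < x := hx
    simp only [hH]
    positivity
  -- measurability of the uncurried kernel
  have hHmeas : Measurable (Function.uncurry H) := by
    have h1 : Measurable (fun p : ℝ × ℝ => f p.1 p.2) := hf_meas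
    show Measurable (fun p : ℝ × ℝ => H p.1 p.2)
    simp only [hH]
    fun_prop
  -- product integrability
  have hprod : Integrable (Function.uncurry H) (μ.prod μ) := by
    rw [integrable_prod_iff' hHmeas.aestronglyMeasurable]
    constructor
    · filter_upwards [ae_restrict_mem measurableSet_Ioi] with t ht
      have hint : IntegrableOn (fun x => x * Real.exp (-s * x) * f x t) (Set.Ioi 0) :=
        moment_integrable hf_meas hf_nonneg hInt hs ht
      have : Integrable (fun x =>
          (t⁻¹ * Real.exp (-lam * t)) * (x * Real.exp (-s * x) * f x t)) μ :=
        hint.const_mul _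
      exact this.congr (Filter.Eventually.of_forall fun x => by
        simp only [Function.uncurry_apply_pair, hH]; ring)
    · have heq : ∀ᵐ t ∂μ, (∫ x, ‖Function.uncurry H (x, t)‖ ∂μ) =
          (α * s ^ (α - 1)) * Real.exp (-(lam + s ^ α) * t) := by
        filter_upwards [ae_restrict_mem measurableSet_Ioi] with t ht
        have : (∫ x, ‖Function.uncurry H (x, t)‖ ∂μ) = ∫ x, H x t ∂μ := by
          refine integral_congr_ae ?_
          filter_upwards [ae_restrict_mem measurableSet_Ioi] with x hx
          simp only [Function.uncurry_apply_pair]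
          exact Real.norm_of_nonneg (hnn t ht x hx)
        rw [this, hinner t ht]
      have hintexp : Integrable
          (fun t => (α * s ^ (α - 1)) * Real.exp (-(lam + s ^ α) * t)) μ :=
        (exp_neg_integrableOn_Ioi 0 hb0).const_mul _
      exact (integrable_congr heq).mpr hintexp
  -- rewrite LHS as a double integral and swap
  have step1 : (∫ x in Set.Ioi (0 : ℝ), Real.exp (-s * x) *
        (x * ∫ t in Set.Ioi (0 : ℝ), f x t * t⁻¹ * Real.exp (-lam * t)))
      = ∫ x, (∫ t, H x t ∂μ) ∂μ := by
    refine integral_congr_ae (Filter.Eventually.of_forall fun x => ?_)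
    dsimp only
    rw [show Real.exp (-s * x) * (x * ∫ t in Set.Ioi (0:ℝ),
          f x t * t⁻¹ * Real.exp (-lam * t))
        = (Real.exp (-s * x) * x) * ∫ t in Set.Ioi (0:ℝ),
          f x t * t⁻¹ * Real.exp (-lam * t) from by ring]
    rw [← MeasureTheory.integral_const_mul]
  rw [step1, MeasureTheory.integral_integral_swap hprod]
  have step2 : (∫ t, (∫ x, H x t ∂μ) ∂μ) =
      ∫ t in Set.Ioi (0:ℝ), (α * s ^ (α - 1)) * Real.exp (-(lam + s ^ α) * t) := by
    refine setIntegral_congr_fun measurableSet_Ioi fun t ht => ?_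
    exact hinner t ht
  rw [step2, MeasureTheory.integral_const_mul]
  have step3 : (∫ t in Set.Ioi (0:ℝ), Real.exp (-(lam + s ^ α) * t))
      = (lam + s ^ α)⁻¹ := by
    have h := MeasureTheory.integral_comp_mul_left_Ioi
      (fun x => Real.exp (-x)) 0 hb0
    rw [mul_zero] at h
    rw [show (fun t : ℝ => Real.exp (-(lam + s ^ α) * t))
        = (fun t : ℝ => Real.exp (-((lam + s ^ α) * t))) from by
      funext t; rw [neg_mul]]
    rw [h, integral_exp_neg_Ioi, neg_zero, Real.exp_zero, smul_eq_mul, mul_one]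
  rw [step3, div_eq_mul_inv]
end
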